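/- arXiv:2403.18179 — 8 statements merged into one kernel-verified Lean document; each statement's English description precedes it below -/
import Mathlib

section
/- Let C, ρ > 0, let L ≥ 2 be an integer, let Λ be a finite set with |Λ| = L, and let η : Λ → ℕ satisfy (1/L)·Σ_{x∈Λ} η_x ≤ ρ. Then for every integer n ≥ 1, (1/(L·(L−1))) · Σ_{x∈Λ} Σ_{y∈Λ, y≠x} [ c(η_y, η_x)·((η_x+1)^n − η_x^n) + c(η_x, η_y)·((η_x−1)^n − η_x^n) ] ≤ 2·C·ρ · (1/L) · Σ_{x∈Λ} (1+η_x)·((η_x+1)^n − η_x^n), where all powers are taken in ℤ and the term containing (η_x−1)^n vanishes when η_x = 0 because c(0, η_y) = 0. -/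
/-!
Since `c (k, l) ≤ C k (1 + l)` and `(η_x - 1)^n ≤ η_x^n` whenever the rate `c (η_x, η_y)` is
nonzero, the pair `(x, y)` contributes at most `C η_y (1 + η_x) ((η_x + 1)^n - η_x^n)`. Summing
over `y ≠ x` costs at most the total mass `Σ_y η_y ≤ ρ L`, and `1 / (L - 1) ≤ 2 / L` for `L ≥ 2`.
-/

open Finset

lemma add_one_pow_sub_pow_nonneg (k n : ℕ) :
    (0 : ℝ) ≤ ((((k : ℤ) + 1) ^ n - (k : ℤ) ^ n : ℤ) : ℝ) := by
  have h : (k : ℤ) ^ n ≤ ((k : ℤ) + 1) ^ n := pow_le_pow_left₀ (by positivity) (by linarith) n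
  exact_mod_cast sub_nonneg.mpr h

lemma Nat.cast_int_sub_one_pow_le_pow {k : ℕ} (hk : 1 ≤ k) (n : ℕ) :
    ((k : ℤ) - 1) ^ n ≤ (k : ℤ) ^ n :=
  pow_le_pow_left₀ (by omega) (by linarith) n

lemma Finset.sum_sum_erase_mul_le_sum_mul_sum {ι : Type*} [Fintype ι] [DecidableEq ι]
    {w a : ι → ℝ} (hw : ∀ i, 0 ≤ w i) (ha : ∀ i, 0 ≤ a i) :
    ∑ x, ∑ y ∈ univ.erase x, w y * a x ≤ (∑ y, w y) * ∑ x, a x := by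
  rw [sum_mul_sum, sum_comm]
  exact sum_le_sum fun x _ ↦ sum_le_sum_of_subset_of_nonneg (erase_subset _ _)
    fun y _ _ ↦ mul_nonneg (hw y) (ha x)

section Rates

variable {C : ℝ} {c : ℕ → ℕ → ℝ}

lemma rate_mul_loss_nonpos (hc_nonneg : ∀ k l, 0 ≤ c k l) (hc_zero : ∀ l, c 0 l = 0)
    (k l n : ℕ) : c k l * ((((k : ℤ) - 1) ^ n - (k : ℤ) ^ n : ℤ) : ℝ) ≤ 0 := by
  rcases Nat.eq_zero_or_pos k with rfl | hk
  · simp [hc_zero]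
  · refine mul_nonpos_of_nonneg_of_nonpos (hc_nonneg _ _) ?_
    exact_mod_cast sub_nonpos.mpr (Nat.cast_int_sub_one_pow_le_pow hk n)

lemma gain_add_loss_le (hc_nonneg : ∀ k l, 0 ≤ c k l) (hc_zero : ∀ l, c 0 l = 0)
    (hc_sub : ∀ k l, c k l ≤ C * k * (1 + l)) (k l n : ℕ) :
    c l k * ((((k : ℤ) + 1) ^ n - (k : ℤ) ^ n : ℤ) : ℝ)
        + c k l * ((((k : ℤ) - 1) ^ n - (k : ℤ) ^ n : ℤ) : ℝ)
      ≤ C * l * ((1 + k) * ((((k : ℤ) + 1) ^ n - (k : ℤ) ^ n : ℤ) : ℝ)) := by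
  calc _ ≤ C * l * (1 + k) * ((((k : ℤ) + 1) ^ n - (k : ℤ) ^ n : ℤ) : ℝ) + 0 :=
        add_le_add (mul_le_mul_of_nonneg_right (hc_sub l k) (add_one_pow_sub_pow_nonneg k n))
          (rate_mul_loss_nonpos hc_nonneg hc_zero k l n)
    _ = _ := by ring

lemma nonneg_of_rate_le (hc_nonneg : ∀ k l, 0 ≤ c k l)
    (hc_sub : ∀ k l, c k l ≤ C * k * (1 + l)) : 0 ≤ C := by
  simpa using (hc_nonneg 1 0).trans (hc_sub 1 0)

end Rates

lemma one_div_mul_sub_one_mul_le {L X : ℝ} (hL : 2 ≤ L) (hX : 0 ≤ X) :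
    1 / (L * (L - 1)) * (L * X) ≤ 2 * (1 / L * X) := by
  have hL0 : 0 < L := by linarith
  have hL1 : 0 < L - 1 := by linarith
  rw [div_mul_eq_mul_div, one_mul, div_le_iff₀ (by positivity)]
  field_simp
  nlinarith

theorem stmt_0_general
    (C ρ : ℝ)
    (c : ℕ → ℕ → ℝ)
    (hc_nonneg : ∀ k l, 0 ≤ c k l)
    (hc_zero : ∀ l, c 0 l = 0)
    (hc_sub : ∀ k l, c k l ≤ C * k * (1 + l))
    (L : ℕ) (hL : 2 ≤ L)
    (Λ : Type*) [Fintype Λ] [DecidableEq Λ]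
    (η : Λ → ℕ)
    (hmass : (1 / (L : ℝ)) * ∑ x, (η x : ℝ) ≤ ρ)
    (n : ℕ) :
    (1 / ((L : ℝ) * ((L : ℝ) - 1))) *
      ∑ x, ∑ y ∈ Finset.univ.erase x,
        (c (η y) (η x) * ((((η x : ℤ) + 1) ^ n - (η x : ℤ) ^ n : ℤ) : ℝ)
          + c (η x) (η y) * ((((η x : ℤ) - 1) ^ n - (η x : ℤ) ^ n : ℤ) : ℝ))
    ≤ 2 * C * ρ *
      ((1 / (L : ℝ)) *
        ∑ x, (1 + (η x : ℝ)) * ((((η x : ℤ) + 1) ^ n - (η x : ℤ) ^ n : ℤ) : ℝ)) := by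
  set a : Λ → ℝ := fun x ↦ (1 + (η x : ℝ)) * ((((η x : ℤ) + 1) ^ n - (η x : ℤ) ^ n : ℤ) : ℝ)
  have hL2 : (2 : ℝ) ≤ L := by exact_mod_cast hL
  have hC : 0 ≤ C := nonneg_of_rate_le hc_nonneg hc_sub
  have ha : ∀ x, 0 ≤ a x := fun x ↦ mul_nonneg (by positivity) (add_one_pow_sub_pow_nonneg _ n)
  have hsum_a : 0 ≤ ∑ x, a x := sum_nonneg fun x _ ↦ ha x
  have htotal : ∑ y, (η y : ℝ) ≤ ρ * L := by
    rwa [one_div, inv_mul_le_iff₀ (by linarith), mul_comm] at hmass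
  have hρ : 0 ≤ ρ := nonneg_of_mul_nonneg_left
    ((sum_nonneg fun y _ ↦ Nat.cast_nonneg (η y)).trans htotal) (by linarith)
  have hfactor : 0 ≤ 1 / ((L : ℝ) * ((L : ℝ) - 1)) :=
    one_div_nonneg.mpr (mul_nonneg (by linarith) (by linarith))
  calc _ ≤ 1 / ((L : ℝ) * ((L : ℝ) - 1)) * ∑ x, ∑ y ∈ univ.erase x, C * η y * a x := by
        gcongr with x _ y _
        exact gain_add_loss_le hc_nonneg hc_zero hc_sub _ _ n
    _ ≤ 1 / ((L : ℝ) * ((L : ℝ) - 1)) * ((∑ y, C * η y) * ∑ x, a x) := by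
        gcongr
        exact sum_sum_erase_mul_le_sum_mul_sum (fun y ↦ by positivity) ha
    _ ≤ 1 / ((L : ℝ) * ((L : ℝ) - 1)) * (L * (C * ρ * ∑ x, a x)) := by
        have hrate_total : ∑ y, C * η y ≤ L * (C * ρ) := by
          rw [← mul_sum]; linarith [mul_le_mul_of_nonneg_left htotal hC]
        rw [← mul_assoc (L : ℝ)]
        gcongr
    _ ≤ 2 * (1 / (L : ℝ) * (C * ρ * ∑ x, a x)) :=
        one_div_mul_sub_one_mul_le hL2 (mul_nonneg (mul_nonneg hC hρ) hsum_a)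
    _ = 2 * C * ρ * (1 / (L : ℝ) * ∑ x, a x) := by ring

/-- Key drift inequality for the empirical n-th moment under the
complete-graph generator with sublinear rates. -/
theorem stmt_0
    (C ρ : ℝ) (hC : 0 < C) (hρ : 0 < ρ)
    (c : ℕ → ℕ → ℝ)
    (hc_nonneg : ∀ k l, 0 ≤ c k l)
    (hc_zero : ∀ l, c 0 l = 0)
    (hc_sub : ∀ k l, c k l ≤ C * k * (1 + l))
    (L : ℕ) (hL : 2 ≤ L)
    (Λ : Type*) [Fintype Λ] [DecidableEq Λ]
    (hcard : Fintype.card Λ = L)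
    (η : Λ → ℕ)
    (hmass : (1 / (L : ℝ)) * ∑ x, (η x : ℝ) ≤ ρ)
    (n : ℕ) (hn : 1 ≤ n) :
    (1 / ((L : ℝ) * ((L : ℝ) - 1))) *
      ∑ x, ∑ y ∈ Finset.univ.erase x,
        (c (η y) (η x) * ((((η x : ℤ) + 1) ^ n - (η x : ℤ) ^ n : ℤ) : ℝ)
          + c (η x) (η y) * ((((η x : ℤ) - 1) ^ n - (η x : ℤ) ^ n : ℤ) : ℝ))
    ≤ 2 * C * ρ *
      ((1 / (L : ℝ)) *
        ∑ x, (1 + (η x : ℝ)) * ((((η x : ℤ) + 1) ^ n - (η x : ℤ) ^ n : ℤ) : ℝ)) :=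
  stmt_0_general C ρ c hc_nonneg hc_zero hc_sub L hL Λ η hmass n
end

section
/- For every integer n ≥ 1 and all C, ρ > 0 there exists a constant C̃ > 0, depending only on C, ρ and n, such that the following holds: for every integer L ≥ 2, every integer W ≥ 1, and every finitely supported F : ℕ → [0,∞) with Σ_k F_k = 1 and Σ_k k·F_k ≤ ρ, one has (L/(L−1))·Σ_{k≥1} c(k,W)·F_k·((W+1)^n − W^n) + (L/(L−1))·[ ((W−1)/W)·Σ_{k≥0} c(W,k)·F_k·((W−1)^n − W^n) + (1/W)·Σ_{k≥0} c(W,k)·F_k·((k+1)^n − W^n) ] − (1/(L−1))·c(W,W)·[ ((W+1)/W)·((W+1)^n − W^n) + ((W−1)/W)·((W−1)^n − W^n) ] ≤ C̃·( 1 + W^n + Σ_{k≥0} (1+k)^{n+1}·F_k ). -/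
/-!
The three pieces of the generator are bounded separately, using `L / (L - 1) ≤ 2`.
Jumps onto the tagged site occur at total rate at most `C (1 + W) ρ` (sublinearity and the first
moment bound) and raise `W ^ n` by at most `n (W + 1) ^ (n - 1)`, which gives `O(W ^ n)`.
A departure of another particle lowers `W ^ n`; a departure of the tagged particle to a site
holding `k` particles costs at most `c(W, k) (k + 1) ^ n ≤ C W (1 + k) ^ (n + 1)`, and the
factor `1 / W` turns this into `C` times the `(n + 1)`-st moment of `F`. The finite-size
correction is subtracted and is nonnegative by midpoint convexity of `m ↦ m ^ (n + 1)`.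
-/

open Function

lemma mul_add_one_pow_sub_pow_le {x : ℝ} (hx : 0 ≤ x) (n : ℕ) :
    (x + 1) * ((x + 1) ^ n - x ^ n) ≤ n * (x + 1) ^ n := by
  induction n with
  | zero => simp
  | succ m ih =>
    have hpow : x ^ m ≤ (x + 1) ^ m := by gcongr; linarith
    push_cast
    rw [pow_succ, pow_succ]
    nlinarith [mul_le_mul_of_nonneg_left ih (by linarith : (0 : ℝ) ≤ x + 1)]

lemma weighted_pow_increments_nonneg {x : ℝ} (hx : 1 ≤ x) (n : ℕ) :
    0 ≤ (x + 1) / x * ((x + 1) ^ n - x ^ n) + (x - 1) / x * ((x - 1) ^ n - x ^ n) := by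
  have hmean := add_pow_le (by linarith : 0 ≤ x + 1) (by linarith : 0 ≤ x - 1) (n + 1)
  rw [add_add_sub_cancel, ← two_mul, mul_pow, pow_succ 2, Nat.add_sub_cancel, mul_assoc] at hmean
  have hmid := le_of_mul_le_mul_left hmean (by positivity)
  have hconvex : 0 ≤ (x + 1) * ((x + 1) ^ n - x ^ n) + (x - 1) * ((x - 1) ^ n - x ^ n) := by
    linear_combination hmid
  calc 0 ≤ ((x + 1) * ((x + 1) ^ n - x ^ n) + (x - 1) * ((x - 1) ^ n - x ^ n)) / x :=
        div_nonneg hconvex (by linarith)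
    _ = _ := by ring

lemma summable_mul_of_support_finite {α : Type*} {F : α → ℝ} (hF : (support F).Finite)
    (a : α → ℝ) : Summable fun k => a k * F k :=
  summable_of_hasFiniteSupport (hF.subset (support_mul_subset_right _ _))

section TaggedSite

variable {C : ℝ} {c : ℕ → ℕ → ℝ} {F : ℕ → ℝ}

lemma tsum_rate_succ_le (hcC : ∀ k l, c k l ≤ C * k * (1 + l)) (hF : ∀ k, 0 ≤ F k)
    (hFfin : (support F).Finite) (W : ℕ) :
    ∑' k, c (k + 1) W * F (k + 1) ≤ C * (1 + W) * ∑' k : ℕ, (k : ℝ) * F k := by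
  have hmoment := summable_mul_of_support_finite hFfin (fun k => (k : ℝ))
  calc ∑' k, c (k + 1) W * F (k + 1)
      ≤ ∑' k, C * (1 + W) * (((k + 1 : ℕ) : ℝ) * F (k + 1)) := by
        refine Summable.tsum_le_tsum (fun k => ?_) ?_ ?_
        · exact (mul_le_mul_of_nonneg_right (hcC (k + 1) W) (hF (k + 1))).trans_eq
            (by push_cast; ring)
        · exact (summable_nat_add_iff 1).mpr
            (summable_mul_of_support_finite hFfin (fun k => c k W))
        · exact ((summable_nat_add_iff 1).mpr hmoment).mul_left _
    _ = C * (1 + W) * ∑' k : ℕ, (k : ℝ) * F k := by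
        rw [tsum_mul_left, hmoment.tsum_eq_zero_add, Nat.cast_zero, zero_mul, zero_add]

lemma tsum_rate_mul_pow_sub_le (hc : ∀ k l, 0 ≤ c k l) (hcC : ∀ k l, c k l ≤ C * k * (1 + l))
    (hF : ∀ k, 0 ≤ F k) (hFfin : (support F).Finite) (W n : ℕ) :
    ∑' k, c W k * F k * (((k : ℝ) + 1) ^ n - (W : ℝ) ^ n)
      ≤ C * W * ∑' k : ℕ, (1 + (k : ℝ)) ^ (n + 1) * F k := by
  rw [← tsum_mul_left]
  refine Summable.tsum_le_tsum (fun k => ?_) ?_ ?_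
  · calc c W k * F k * (((k : ℝ) + 1) ^ n - (W : ℝ) ^ n)
        ≤ c W k * F k * ((1 + k) ^ n) := by
          gcongr
          · exact mul_nonneg (hc W k) (hF k)
          · rw [add_comm]; exact sub_le_self _ (by positivity)
      _ ≤ C * W * (1 + k) * F k * (1 + k) ^ n := by gcongr; exacts [hF k, hcC W k]
      _ = C * W * ((1 + (k : ℝ)) ^ (n + 1) * F k) := by ring
  · exact (summable_mul_of_support_finite hFfin
      (fun k => c W k * (((k : ℝ) + 1) ^ n - (W : ℝ) ^ n))).congr fun k => by ring
  · exact (summable_mul_of_support_finite hFfin _).mul_left _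

lemma arrival_drift_le {r ρ : ℝ} (hr : r ≤ 2) (hC : 0 ≤ C) (hc : ∀ k l, 0 ≤ c k l)
    (hcC : ∀ k l, c k l ≤ C * k * (1 + l)) (hF : ∀ k, 0 ≤ F k) (hFfin : (support F).Finite)
    (hFρ : ∑' k : ℕ, (k : ℝ) * F k ≤ ρ) {W : ℕ} (hW : 1 ≤ W) (n : ℕ) :
    r * (∑' k, c (k + 1) W * F (k + 1)) * (((W : ℝ) + 1) ^ n - (W : ℝ) ^ n)
      ≤ 2 * C * ρ * n * 2 ^ n * (W : ℝ) ^ n := by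
  have hW1 : (1 : ℝ) ≤ W := by exact_mod_cast hW
  have hρ : 0 ≤ ρ := (tsum_nonneg fun k => mul_nonneg k.cast_nonneg (hF k)).trans hFρ
  have hrate : 0 ≤ ∑' k, c (k + 1) W * F (k + 1) :=
    tsum_nonneg fun k => mul_nonneg (hc _ _) (hF _)
  have hincrement : (0 : ℝ) ≤ (W + 1) ^ n - W ^ n := sub_nonneg.mpr (by gcongr; linarith)
  calc r * (∑' k, c (k + 1) W * F (k + 1)) * (((W : ℝ) + 1) ^ n - (W : ℝ) ^ n)
      ≤ 2 * (C * (1 + W) * ρ) * ((W + 1) ^ n - W ^ n) := by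
        gcongr
        exact (tsum_rate_succ_le hcC hF hFfin W).trans (by gcongr)
    _ = 2 * C * ρ * ((W + 1) * ((W + 1) ^ n - W ^ n)) := by ring
    _ ≤ 2 * C * ρ * (n * (2 * W) ^ n) := by
        gcongr 2 * C * ρ * ?_
        exact (mul_add_one_pow_sub_pow_le (by positivity) n).trans (by gcongr; linarith)
    _ = 2 * C * ρ * n * 2 ^ n * W ^ n := by ring

lemma departure_drift_le {r : ℝ} (hr0 : 0 ≤ r) (hr : r ≤ 2) (hC : 0 ≤ C)
    (hc : ∀ k l, 0 ≤ c k l) (hcC : ∀ k l, c k l ≤ C * k * (1 + l)) (hF : ∀ k, 0 ≤ F k)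
    (hFfin : (support F).Finite) {W : ℕ} (hW : 1 ≤ W) (n : ℕ) :
    r * (((W : ℝ) - 1) / W * (∑' k, c W k * F k) * (((W : ℝ) - 1) ^ n - (W : ℝ) ^ n)
      + 1 / (W : ℝ) * ∑' k, c W k * F k * (((k : ℝ) + 1) ^ n - (W : ℝ) ^ n))
      ≤ 2 * (C * ∑' k : ℕ, (1 + (k : ℝ)) ^ (n + 1) * F k) := by
  have hW1 : (1 : ℝ) ≤ W := by exact_mod_cast hW
  have hmoment : 0 ≤ ∑' k : ℕ, (1 + (k : ℝ)) ^ (n + 1) * F k :=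
    tsum_nonneg fun k => mul_nonneg (by positivity) (hF k)
  have hloss : ((W : ℝ) - 1) / W * (∑' k, c W k * F k) * (((W : ℝ) - 1) ^ n - W ^ n) ≤ 0 :=
    mul_nonpos_of_nonneg_of_nonpos
      (mul_nonneg (div_nonneg (by linarith) (by positivity))
        (tsum_nonneg fun k => mul_nonneg (hc _ _) (hF _)))
      (sub_nonpos.mpr (by gcongr; linarith))
  have hgain : 1 / (W : ℝ) * ∑' k, c W k * F k * (((k : ℝ) + 1) ^ n - W ^ n)
      ≤ C * ∑' k : ℕ, (1 + (k : ℝ)) ^ (n + 1) * F k := by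
    rw [one_div_mul_eq_div, div_le_iff₀ (by positivity)]
    linarith [tsum_rate_mul_pow_sub_le hc hcC hF hFfin W n]
  calc _ ≤ r * (C * ∑' k : ℕ, (1 + (k : ℝ)) ^ (n + 1) * F k) := by gcongr; linarith
    _ ≤ _ := mul_le_mul_of_nonneg_right hr (mul_nonneg hC hmoment)

end TaggedSite

theorem stmt_3_general (n : ℕ) (C ρ : ℝ) (hC : 0 < C) (hρ : 0 < ρ) :
    ∃ Ct : ℝ, 0 < Ct ∧
      ∀ c : ℕ → ℕ → ℝ,
        (∀ k l, 0 ≤ c k l) →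
        (∀ l, c 0 l = 0) →
        (∀ k l, c k l ≤ C * k * (1 + l)) →
        ∀ L : ℕ, 2 ≤ L → ∀ W : ℕ, 1 ≤ W →
        ∀ F : ℕ → ℝ, (∀ k, 0 ≤ F k) → (Function.support F).Finite →
          (∑' k : ℕ, F k) = 1 → (∑' k : ℕ, (k : ℝ) * F k) ≤ ρ →
          ((L : ℝ) / ((L : ℝ) - 1)) *
              (∑' k : ℕ, c (k + 1) W * F (k + 1)) *
              ((((W : ℤ) + 1) ^ n - (W : ℤ) ^ n : ℤ) : ℝ)
            + ((L : ℝ) / ((L : ℝ) - 1)) *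
              ((((W : ℝ) - 1) / (W : ℝ)) * (∑' k : ℕ, c W k * F k) *
                  ((((W : ℤ) - 1) ^ n - (W : ℤ) ^ n : ℤ) : ℝ)
                + (1 / (W : ℝ)) *
                  ∑' k : ℕ, c W k * F k * ((((k : ℤ) + 1) ^ n - (W : ℤ) ^ n : ℤ) : ℝ))
            - (1 / ((L : ℝ) - 1)) * c W W *
              ((((W : ℝ) + 1) / (W : ℝ)) * ((((W : ℤ) + 1) ^ n - (W : ℤ) ^ n : ℤ) : ℝ)
                + (((W : ℝ) - 1) / (W : ℝ)) * ((((W : ℤ) - 1) ^ n - (W : ℤ) ^ n : ℤ) : ℝ))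
          ≤ Ct * (1 + (W : ℝ) ^ n + ∑' k : ℕ, (1 + (k : ℝ)) ^ (n + 1) * F k) := by
  refine ⟨2 * C * ρ * n * 2 ^ n + 2 * C + 1, by positivity, ?_⟩
  intro c hc _ hcC L hL W hW F hF hFfin _ hFρ
  push_cast
  have hL2 : (2 : ℝ) ≤ L := by exact_mod_cast hL
  have hr0 : 0 ≤ (L : ℝ) / (L - 1) := div_nonneg (by linarith) (by linarith)
  have hr2 : (L : ℝ) / (L - 1) ≤ 2 := by rw [div_le_iff₀ (by linarith)]; linarith
  have harrival := arrival_drift_le hr2 hC.le hc hcC hF hFfin hFρ hW n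
  have hdeparture := departure_drift_le hr0 hr2 hC.le hc hcC hF hFfin hW n
  have hcorrection := mul_nonneg
    (mul_nonneg (one_div_nonneg.mpr (by linarith : (0 : ℝ) ≤ L - 1)) (hc W W))
    (weighted_pow_increments_nonneg (by exact_mod_cast hW : (1 : ℝ) ≤ W) n)
  have hmoment : 0 ≤ ∑' k : ℕ, (1 + (k : ℝ)) ^ (n + 1) * F k :=
    tsum_nonneg fun k => mul_nonneg (by positivity) (hF k)
  have hCt : 0 < 2 * C * ρ * n * 2 ^ n + 2 * C + 1 := by positivity
  have hmoment_term := mul_nonneg (by positivity : (0 : ℝ) ≤ 2 * C * ρ * n * 2 ^ n + 1) hmoment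
  have hpow_term := mul_nonneg (by positivity : (0 : ℝ) ≤ 2 * C + 1) (by positivity : (0 : ℝ) ≤ W ^ n)
  linarith

/-- Key drift inequality for the tagged-site occupation number process
applied to `g(m) = m^n`: the generator is bounded by
`C̃·(1 + W^n + Σ_k (1+k)^{n+1}·F_k)` with `C̃` depending only on `C, ρ, n`. -/
theorem stmt_3 (n : ℕ) (hn : 1 ≤ n) (C ρ : ℝ) (hC : 0 < C) (hρ : 0 < ρ) :
    ∃ Ct : ℝ, 0 < Ct ∧
      ∀ c : ℕ → ℕ → ℝ,
        (∀ k l, 0 ≤ c k l) →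
        (∀ l, c 0 l = 0) →
        (∀ k l, c k l ≤ C * k * (1 + l)) →
        ∀ L : ℕ, 2 ≤ L → ∀ W : ℕ, 1 ≤ W →
        ∀ F : ℕ → ℝ, (∀ k, 0 ≤ F k) → (Function.support F).Finite →
          (∑' k : ℕ, F k) = 1 → (∑' k : ℕ, (k : ℝ) * F k) ≤ ρ →
          ((L : ℝ) / ((L : ℝ) - 1)) *
              (∑' k : ℕ, c (k + 1) W * F (k + 1)) *
              ((((W : ℤ) + 1) ^ n - (W : ℤ) ^ n : ℤ) : ℝ)
            + ((L : ℝ) / ((L : ℝ) - 1)) *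
              ((((W : ℝ) - 1) / (W : ℝ)) * (∑' k : ℕ, c W k * F k) *
                  ((((W : ℤ) - 1) ^ n - (W : ℤ) ^ n : ℤ) : ℝ)
                + (1 / (W : ℝ)) *
                  ∑' k : ℕ, c W k * F k * ((((k : ℤ) + 1) ^ n - (W : ℤ) ^ n : ℤ) : ℝ))
            - (1 / ((L : ℝ) - 1)) * c W W *
              ((((W : ℝ) + 1) / (W : ℝ)) * ((((W : ℤ) + 1) ^ n - (W : ℤ) ^ n : ℤ) : ℝ)
                + (((W : ℝ) - 1) / (W : ℝ)) * ((((W : ℤ) - 1) ^ n - (W : ℤ) ^ n : ℤ) : ℝ))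
          ≤ Ct * (1 + (W : ℝ) ^ n + ∑' k : ℕ, (1 + (k : ℝ)) ^ (n + 1) * F k) :=
  stmt_3_general n C ρ hC hρ
end

section
/- Let C, ρ > 0 and set C̄ := 2·C·(1+3ρ). Then for all integers n ≥ 1 and M ≥ 1, and every F : ℕ → [0,∞) with Σ_k F_k = 1, Σ_k k·F_k ≤ ρ and Σ_k (1+k)³·F_k < ∞, one has C̄·n·( ((n+1)∧M)² − (n∧M)² ) + 2·C·Σ_{k≥0} (1+k)·F_k·( ((2n+k)∧M)² − (n∧M)² ) ≤ 6·C̄·(n∧M)² + 2·C·Σ_{k≥0}(1+k)³·F_k + 8·C·(n∧M)·Σ_{k≥0}(1+k)²·F_k, where a∧b denotes the minimum of a and b. -/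
/-!
Write `m = n ∧ M`. The `+1` jump raises `(· ∧ M)²` by at most `2n + 1 ≤ 3n²` and only when
`m = n`, giving `3C̄m²`. A jump to `2n + k` lands in `[m, 2m + k]`, so it raises `(· ∧ M)²` by at
most `(2m + k)² - m² ≤ (1+k)² + 4m(1+k) + 3m²`; after weighting by `(1+k)F_k` and summing,
`Σ (1+k)F_k = 1 + Σ kF_k ≤ 1 + ρ` turns the last part into `6C(1+ρ)m² ≤ 3C̄m²`.
-/

lemma mul_sq_min_succ_sub_sq_min_le (n M : ℕ) :
    (n : ℝ) * (((min (n + 1) M : ℕ) : ℝ) ^ 2 - ((min n M : ℕ) : ℝ) ^ 2)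
      ≤ 3 * ((min n M : ℕ) : ℝ) ^ 2 := by
  rcases le_or_gt M n with hMn | hnM
  · rw [min_eq_right (by omega : M ≤ n + 1), min_eq_right hMn]
    simp
  · rw [min_eq_left (by omega : n + 1 ≤ M), min_eq_left hnM.le]
    push_cast
    have hn : (n : ℝ) ≤ n ^ 2 := by exact_mod_cast Nat.le_self_pow two_ne_zero n
    nlinarith

lemma sq_sub_sq_le_of_le_two_mul_add {m x k : ℝ} (hm : 0 ≤ m) (hk : 0 ≤ k)
    (hlo : m ≤ x) (hhi : x ≤ 2 * m + k) :
    x ^ 2 - m ^ 2 ≤ (1 + k) ^ 2 + 4 * m * (1 + k) + 3 * m ^ 2 := by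
  nlinarith

lemma summable_one_add_pow_mul_of_le {F : ℕ → ℝ} (hF : ∀ k, 0 ≤ F k) {i j : ℕ} (hij : i ≤ j)
    (h : Summable fun k : ℕ => (1 + (k : ℝ)) ^ j * F k) :
    Summable fun k : ℕ => (1 + (k : ℝ)) ^ i * F k :=
  h.of_nonneg_of_le (fun k => mul_nonneg (by positivity) (hF k)) fun k =>
    mul_le_mul_of_nonneg_right (pow_le_pow_right₀ (by simp) hij) (hF k)

lemma tsum_one_add_mul_eq {F : ℕ → ℝ} (hF : ∀ k, 0 ≤ F k)
    (h : Summable fun k : ℕ => (1 + (k : ℝ)) * F k) :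
    ∑' k : ℕ, (1 + (k : ℝ)) * F k = ∑' k, F k + ∑' k : ℕ, (k : ℝ) * F k := by
  have hF0 : Summable F :=
    h.of_nonneg_of_le hF fun k => by nlinarith [hF k, k.cast_nonneg (α := ℝ)]
  have hk : Summable fun k : ℕ => (k : ℝ) * F k :=
    h.of_nonneg_of_le (fun k => mul_nonneg k.cast_nonneg (hF k)) fun k => by nlinarith [hF k]
  rw [← hF0.tsum_add hk]
  simp only [add_mul, one_mul]

lemma tsum_one_add_mul_mul_sq_sub_sq_le {F : ℕ → ℝ} (hF : ∀ k, 0 ≤ F k)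
    (hF3 : Summable fun k : ℕ => (1 + (k : ℝ)) ^ 3 * F k) {m : ℝ} (hm : 0 ≤ m) {x : ℕ → ℝ}
    (hlo : ∀ k, m ≤ x k) (hhi : ∀ k, x k ≤ 2 * m + k) :
    ∑' k : ℕ, (1 + (k : ℝ)) * F k * (x k ^ 2 - m ^ 2)
      ≤ ∑' k : ℕ, (1 + (k : ℝ)) ^ 3 * F k + 4 * m * ∑' k : ℕ, (1 + (k : ℝ)) ^ 2 * F k
        + 3 * m ^ 2 * ∑' k : ℕ, (1 + (k : ℝ)) * F k := by
  have hF2 := summable_one_add_pow_mul_of_le hF (by norm_num : 2 ≤ 3) hF3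
  have hF1 : Summable fun k : ℕ => (1 + (k : ℝ)) * F k := by
    simpa using summable_one_add_pow_mul_of_le hF (by norm_num : 1 ≤ 3) hF3
  have hbound : Summable fun k : ℕ => (1 + (k : ℝ)) ^ 3 * F k
      + 4 * m * ((1 + (k : ℝ)) ^ 2 * F k) + 3 * m ^ 2 * ((1 + (k : ℝ)) * F k) :=
    (hF3.add (hF2.mul_left _)).add (hF1.mul_left _)
  have hle : ∀ k : ℕ, (1 + (k : ℝ)) * F k * (x k ^ 2 - m ^ 2) ≤ (1 + (k : ℝ)) ^ 3 * F k
      + 4 * m * ((1 + (k : ℝ)) ^ 2 * F k) + 3 * m ^ 2 * ((1 + (k : ℝ)) * F k) := fun k => by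
    have hw : 0 ≤ (1 + (k : ℝ)) * F k := mul_nonneg (by positivity) (hF k)
    calc (1 + (k : ℝ)) * F k * (x k ^ 2 - m ^ 2)
        ≤ (1 + (k : ℝ)) * F k * ((1 + k) ^ 2 + 4 * m * (1 + k) + 3 * m ^ 2) :=
          mul_le_mul_of_nonneg_left
            (sq_sub_sq_le_of_le_two_mul_add hm k.cast_nonneg (hlo k) (hhi k)) hw
      _ = _ := by ring
  have hnonneg : ∀ k : ℕ, 0 ≤ (1 + (k : ℝ)) * F k * (x k ^ 2 - m ^ 2) := fun k =>
    mul_nonneg (mul_nonneg (by positivity) (hF k))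
      (sub_nonneg.2 (pow_le_pow_left₀ hm (hlo k) 2))
  calc _ ≤ _ := (hbound.of_nonneg_of_le hnonneg hle).tsum_le_tsum hle hbound
    _ = _ := by
      rw [(hF3.add (hF2.mul_left _)).tsum_add (hF1.mul_left _), hF3.tsum_add (hF2.mul_left _),
        tsum_mul_left, tsum_mul_left]

theorem stmt_5_general (C ρ : ℝ) (hC : 0 < C)
    (n M : ℕ)
    (F : ℕ → ℝ) (hF : ∀ k, 0 ≤ F k)
    (hF1 : (∑' k : ℕ, F k) = 1) (hFρ : (∑' k : ℕ, (k : ℝ) * F k) ≤ ρ)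
    (hF3 : Summable (fun k : ℕ => (1 + (k : ℝ)) ^ 3 * F k)) :
    (2 * C * (1 + 3 * ρ)) * n *
        (((min (n + 1) M : ℕ) : ℝ) ^ 2 - ((min n M : ℕ) : ℝ) ^ 2)
      + 2 * C * ∑' k : ℕ, (1 + (k : ℝ)) * F k *
          (((min (2 * n + k) M : ℕ) : ℝ) ^ 2 - ((min n M : ℕ) : ℝ) ^ 2)
    ≤ 6 * (2 * C * (1 + 3 * ρ)) * ((min n M : ℕ) : ℝ) ^ 2
      + 2 * C * (∑' k : ℕ, (1 + (k : ℝ)) ^ 3 * F k)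
      + 8 * C * ((min n M : ℕ) : ℝ) * ∑' k : ℕ, (1 + (k : ℝ)) ^ 2 * F k := by
  have hρ : 0 ≤ ρ := (tsum_nonneg fun k => mul_nonneg k.cast_nonneg (hF k)).trans hFρ
  have hfirst := mul_le_mul_of_nonneg_left (mul_sq_min_succ_sub_sq_min_le n M)
    (by positivity : 0 ≤ 2 * C * (1 + 3 * ρ))
  have hjump := mul_le_mul_of_nonneg_left
    (tsum_one_add_mul_mul_sq_sub_sq_le hF hF3 (Nat.cast_nonneg (min n M))
      (x := fun k => ((min (2 * n + k) M : ℕ) : ℝ)) (fun k => Nat.cast_le.2 (by omega))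
      (fun k => by exact_mod_cast (show min (2 * n + k) M ≤ 2 * min n M + k by omega)))
    (by positivity : 0 ≤ 2 * C)
  have hmean : ∑' k : ℕ, (1 + (k : ℝ)) * F k ≤ 1 + ρ := by
    rw [tsum_one_add_mul_eq hF
      (by simpa using summable_one_add_pow_mul_of_le hF (by norm_num : 1 ≤ 3) hF3), hF1]
    linarith
  have hlast := mul_le_mul_of_nonneg_left hmean
    (by positivity : 0 ≤ 6 * C * ((min n M : ℕ) : ℝ) ^ 2)
  linarith [mul_nonneg (mul_nonneg hC.le hρ) (sq_nonneg ((min n M : ℕ) : ℝ))]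

/-- Key drift estimate for the dominating coupling process applied to
the truncated square function `g_M(m) = (m ∧ M)²`. -/
theorem stmt_5 (C ρ : ℝ) (hC : 0 < C) (hρ : 0 < ρ)
    (n M : ℕ) (hn : 1 ≤ n) (hM : 1 ≤ M)
    (F : ℕ → ℝ) (hF : ∀ k, 0 ≤ F k)
    (hF1 : (∑' k : ℕ, F k) = 1) (hFρ : (∑' k : ℕ, (k : ℝ) * F k) ≤ ρ)
    (hF3 : Summable (fun k : ℕ => (1 + (k : ℝ)) ^ 3 * F k)) :
    (2 * C * (1 + 3 * ρ)) * n *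
        (((min (n + 1) M : ℕ) : ℝ) ^ 2 - ((min n M : ℕ) : ℝ) ^ 2)
      + 2 * C * ∑' k : ℕ, (1 + (k : ℝ)) * F k *
          (((min (2 * n + k) M : ℕ) : ℝ) ^ 2 - ((min n M : ℕ) : ℝ) ^ 2)
    ≤ 6 * (2 * C * (1 + 3 * ρ)) * ((min n M : ℕ) : ℝ) ^ 2
      + 2 * C * (∑' k : ℕ, (1 + (k : ℝ)) ^ 3 * F k)
      + 8 * C * ((min n M : ℕ) : ℝ) * ∑' k : ℕ, (1 + (k : ℝ)) ^ 2 * F k :=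
  stmt_5_general C ρ hC n M F hF hF1 hFρ hF3
end

section
/- Let C, ρ, K > 0, let L ≥ 2 be an integer, let Λ be a finite set with |Λ| = L, and let η : Λ → ℕ satisfy Σ_{x∈Λ} η_x ≤ ρ·L. Let h : ℕ → ℝ be Lipschitz with constant K, i.e. |h(a) − h(b)| ≤ K·|a − b| for all a,b ∈ ℕ. Then | (1/(L·(L−1))) · Σ_{x∈Λ} Σ_{y∈Λ, y≠x} c(η_x, η_y)·[ (h(η_x−1) − h(η_x)) + (h(η_y+1) − h(η_y)) ] | ≤ 4·C·K·ρ·(1+ρ), where the term with η_x = 0 vanishes because c(0, η_y) = 0. -/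
/-!
Each jump changes `h` at one site by one unit, so every increment of `h` is at most `K` and each
summand is bounded by `2CK η_x (1 + η_y)`. Summing over all ordered pairs gives at most
`2CK (Σ η)(L + Σ η) ≤ 2CKρ(1+ρ) L²`, and `L² ≤ 2 L (L - 1)` once `L ≥ 2`.
-/

open Finset

section Lipschitz

variable {h : ℕ → ℝ} {K : ℝ}

theorem abs_succ_sub_le_of_lipschitz (hLip : ∀ a b : ℕ, |h a - h b| ≤ K * |(a : ℝ) - (b : ℝ)|)
    (n : ℕ) : |h (n + 1) - h n| ≤ K := by
  simpa using hLip (n + 1) n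

/-- At `n = 0` the truncated subtraction `0 - 1 = 0` makes the increment vanish. -/
theorem abs_pred_sub_le_of_lipschitz (hLip : ∀ a b : ℕ, |h a - h b| ≤ K * |(a : ℝ) - (b : ℝ)|)
    (n : ℕ) : |h (n - 1) - h n| ≤ K := by
  rcases n with _ | n
  · simpa using (abs_nonneg _).trans (abs_succ_sub_le_of_lipschitz hLip 0)
  · rw [abs_sub_comm]
    exact abs_succ_sub_le_of_lipschitz hLip n

theorem abs_rate_mul_jump_le {c : ℕ → ℕ → ℝ} {C : ℝ} (hc_nonneg : ∀ k l, 0 ≤ c k l)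
    (hc_sub : ∀ k l, c k l ≤ C * k * (1 + l))
    (hLip : ∀ a b : ℕ, |h a - h b| ≤ K * |(a : ℝ) - (b : ℝ)|) (k l : ℕ) :
    |c k l * ((h (k - 1) - h k) + (h (l + 1) - h l))| ≤ 2 * C * K * k * (1 + l) := by
  have hjump : |(h (k - 1) - h k) + (h (l + 1) - h l)| ≤ 2 * K :=
    calc _ ≤ |h (k - 1) - h k| + |h (l + 1) - h l| := abs_add_le _ _
      _ ≤ K + K := add_le_add (abs_pred_sub_le_of_lipschitz hLip k)
          (abs_succ_sub_le_of_lipschitz hLip l)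
      _ = 2 * K := by ring
  rw [abs_mul, abs_of_nonneg (hc_nonneg k l)]
  calc c k l * |(h (k - 1) - h k) + (h (l + 1) - h l)|
      ≤ C * k * (1 + l) * (2 * K) :=
        mul_le_mul (hc_sub k l) hjump (abs_nonneg _) ((hc_nonneg k l).trans (hc_sub k l))
    _ = 2 * C * K * k * (1 + l) := by ring

end Lipschitz

theorem abs_sum_sum_erase_le_sum_mul_sum {Λ : Type*} [Fintype Λ] [DecidableEq Λ]
    {f : Λ → Λ → ℝ} {a b : Λ → ℝ} (hf : ∀ x y, |f x y| ≤ a x * b y) :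
    |∑ x, ∑ y ∈ univ.erase x, f x y| ≤ (∑ x, a x) * ∑ y, b y := by
  rw [sum_mul_sum]
  refine (abs_sum_le_sum_abs _ _).trans (sum_le_sum fun x _ => ?_)
  refine (abs_sum_le_sum_abs _ _).trans ?_
  exact (sum_le_sum fun y _ => hf x y).trans <| sum_le_sum_of_subset_of_nonneg
    (erase_subset _ _) fun y _ _ => (abs_nonneg _).trans (hf x y)

theorem stmt_8_general (C ρ K : ℝ) (hC : 0 < C) (hρ : 0 < ρ) (hK : 0 < K)
    (c : ℕ → ℕ → ℝ)
    (hc_nonneg : ∀ k l, 0 ≤ c k l)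
    (hc_sub : ∀ k l, c k l ≤ C * k * (1 + l))
    (L : ℕ) (hL : 2 ≤ L)
    (Λ : Type*) [Fintype Λ] [DecidableEq Λ]
    (hcard : Fintype.card Λ = L)
    (η : Λ → ℕ)
    (hmass : (∑ x, (η x : ℝ)) ≤ ρ * L)
    (h : ℕ → ℝ)
    (hLip : ∀ a b : ℕ, |h a - h b| ≤ K * |(a : ℝ) - (b : ℝ)|) :
    |(1 / ((L : ℝ) * ((L : ℝ) - 1))) *
        ∑ x, ∑ y ∈ Finset.univ.erase x,
          c (η x) (η y) * ((h (η x - 1) - h (η x)) + (h (η y + 1) - h (η y)))|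
    ≤ 4 * C * K * ρ * (1 + ρ) := by
  have hL2 : (2 : ℝ) ≤ L := by exact_mod_cast hL
  have hLL : 0 < (L : ℝ) * ((L : ℝ) - 1) := by nlinarith
  have hsum := abs_sum_sum_erase_le_sum_mul_sum (a := fun x => 2 * C * K * η x)
    (b := fun y => 1 + (η y : ℝ)) fun x y => by
      simpa only [mul_assoc] using abs_rate_mul_jump_le hc_nonneg hc_sub hLip (η x) (η y)
  have hrates : ∑ x, 2 * C * K * (η x : ℝ) ≤ 2 * C * K * (ρ * L) := by
    rw [← mul_sum]; gcongr
  have hsites : ∑ y, (1 + (η y : ℝ)) ≤ L * (1 + ρ) := by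
    rw [sum_add_distrib]; simp only [sum_const, card_univ, hcard, nsmul_eq_mul]; linarith
  rw [abs_mul, abs_of_pos (by positivity), one_div, inv_mul_le_iff₀ hLL]
  calc _ ≤ 2 * C * K * (ρ * L) * (L * (1 + ρ)) :=
        hsum.trans (mul_le_mul hrates hsites (by positivity) (by positivity))
    _ = 2 * C * K * ρ * (1 + ρ) * (L * L) := by ring
    _ ≤ 2 * C * K * ρ * (1 + ρ) * (2 * (L * (L - 1))) :=
        mul_le_mul_of_nonneg_left (by nlinarith) (by positivity)
    _ = _ := by ring

/-- Uniform bound on the complete-graph generator applied to the empirical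
average of a Lipschitz function: `|ℒH(η)| ≤ 4CKρ(1+ρ)`. -/
theorem stmt_8 (C ρ K : ℝ) (hC : 0 < C) (hρ : 0 < ρ) (hK : 0 < K)
    (c : ℕ → ℕ → ℝ)
    (hc_nonneg : ∀ k l, 0 ≤ c k l)
    (hc_zero : ∀ l, c 0 l = 0)
    (hc_sub : ∀ k l, c k l ≤ C * k * (1 + l))
    (L : ℕ) (hL : 2 ≤ L)
    (Λ : Type*) [Fintype Λ] [DecidableEq Λ]
    (hcard : Fintype.card Λ = L)
    (η : Λ → ℕ)
    (hmass : (∑ x, (η x : ℝ)) ≤ ρ * L)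
    (h : ℕ → ℝ)
    (hLip : ∀ a b : ℕ, |h a - h b| ≤ K * |(a : ℝ) - (b : ℝ)|) :
    |(1 / ((L : ℝ) * ((L : ℝ) - 1))) *
        ∑ x, ∑ y ∈ Finset.univ.erase x,
          c (η x) (η y) * ((h (η x - 1) - h (η x)) + (h (η y + 1) - h (η y)))|
    ≤ 4 * C * K * ρ * (1 + ρ) :=
  stmt_8_general C ρ K hC hρ hK c hc_nonneg hc_sub L hL Λ hcard η hmass h hLip
end

section
/- Let C > 0 and let f : ℕ → [0,∞) satisfy Σ_{k≥0} (1+k)²·f_k < ∞. Define μ_k := Σ_{l≥0} c(k,l)·f_l and β_k := Σ_{l≥1} c(l,k)·f_l (both series converge absolutely), with the conventions f_{−1} = 0, β_{−1} = 0 and μ_0 = 0. Then the series Σ_{k≥0} k·[ μ_{k+1}·f_{k+1} + β_{k−1}·f_{k−1} − (μ_k + β_k)·f_k ] converges absolutely and equals 0. -/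
/-!
Write `D_k = μ_k f_k` and `B_k = β_k f_k`. Summing by parts, `Σ k (D_{k+1} - D_k) = D_0 - Σ D`
and `Σ k (B_{k-1} - B_k) = Σ B`, so, as `μ_0 = 0`, the series equals `Σ_k β_k f_k - Σ_k μ_k f_k`.
Both are the double series `Σ_{k,l} c(k,l) f_k f_l`, summed in the two orders, which is legitimate
because the sublinear bound on `c` dominates it by `C (Σ_k (1+k) f_k)²`. The second moment of `f`
is what makes `Σ k D_k` and `Σ k B_k` converge.
-/

open Function

section Telescoping

variable {R : Type*} [CommRing R] [TopologicalSpace R] [IsTopologicalAddGroup R]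

theorem HasSum.nat_mul_succ_sub {D : ℕ → R} {a b : R} (hD : HasSum D a)
    (hkD : HasSum (fun k : ℕ => (k : R) * D k) b) :
    HasSum (fun k : ℕ => (k : R) * (D (k + 1) - D k)) (D 0 - a) := by
  have h := ((hasSum_nat_add_iff' 1).mpr hkD).sub ((hasSum_nat_add_iff' 1).mpr hD) |>.sub hkD
  refine (congrArg₂ HasSum ?_ ?_).mp h
  · ext k; push_cast; ring
  · simp only [Finset.sum_range_one, Nat.cast_zero, zero_mul]; ring

theorem HasSum.nat_mul_pred_sub {B : ℕ → R} {a b : R} (hB : HasSum B a)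
    (hkB : HasSum (fun k : ℕ => (k : R) * B k) b) :
    HasSum (fun k : ℕ => (k : R) * ((if k = 0 then 0 else B (k - 1)) - B k)) a := by
  have hpred : HasSum (fun k : ℕ => (k : R) * if k = 0 then 0 else B (k - 1)) (b + a) := by
    rw [← hasSum_nat_add_iff' 1]
    refine (congrArg₂ HasSum ?_ ?_).mp (hkB.add hB)
    · ext k
      simp only [Nat.cast_add, Nat.cast_one, Nat.add_eq_zero_iff, one_ne_zero, and_false,
        ↓reduceIte, add_tsub_cancel_right]
      ring
    · simp
  refine (congrArg₂ HasSum ?_ ?_).mp (hpred.sub hkB)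
  · ext k; ring
  · ring

end Telescoping

theorem summable_of_summable_one_add_mul {g : ℕ → ℝ} (hg : ∀ k, 0 ≤ g k)
    (h : Summable fun k : ℕ => (1 + (k : ℝ)) * g k) : Summable g :=
  h.of_nonneg_of_le hg fun k => le_mul_of_one_le_left (hg k) (by simp)

theorem summable_nat_mul_of_summable_one_add_mul {g : ℕ → ℝ} (hg : ∀ k, 0 ≤ g k)
    (h : Summable fun k : ℕ => (1 + (k : ℝ)) * g k) : Summable fun k : ℕ => (k : ℝ) * g k :=
  h.of_nonneg_of_le (fun k => mul_nonneg k.cast_nonneg (hg k))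
    fun k => mul_le_mul_of_nonneg_right (by linarith) (hg k)

/-- `μ_k = jumpRate c f k`, and, as `c 0 l = 0`, `β_k = jumpRate (swap c) f k`. -/
noncomputable def jumpRate (c : ℕ → ℕ → ℝ) (f : ℕ → ℝ) (k : ℕ) : ℝ :=
  ∑' l, c k l * f l

section JumpRate

variable {c : ℕ → ℕ → ℝ} {f : ℕ → ℝ} {C : ℝ}

theorem tsum_jumpRate_mul_swap (h : Summable fun p : ℕ × ℕ => c p.1 p.2 * f p.2 * f p.1) :
    ∑' k, jumpRate c f k * f k = ∑' k, jumpRate (swap c) f k * f k := by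
  simp only [jumpRate, swap, ← tsum_mul_right]
  rw [← Summable.tsum_comm (f := fun k l => c k l * f l * f k) h]
  simp only [mul_right_comm]

theorem jumpRate_nonneg (hc0 : ∀ k l, 0 ≤ c k l) (hf0 : ∀ k, 0 ≤ f k) (k : ℕ) :
    0 ≤ jumpRate c f k :=
  tsum_nonneg fun l => mul_nonneg (hc0 k l) (hf0 l)

variable (hc0 : ∀ k l, 0 ≤ c k l) (hc : ∀ k l, c k l ≤ C * (1 + k) * (1 + l))
  (hf0 : ∀ k, 0 ≤ f k) (hf : Summable fun k : ℕ => (1 + (k : ℝ)) * f k)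
include hc0 hc hf0 hf

theorem summable_kernel_mul_mul :
    Summable fun p : ℕ × ℕ => c p.1 p.2 * f p.2 * f p.1 := by
  have hw0 (k : ℕ) : 0 ≤ (1 + (k : ℝ)) * f k := mul_nonneg (by positivity) (hf0 k)
  refine ((hf.mul_of_nonneg hf hw0 hw0).mul_left C).of_nonneg_of_le
    (fun p => mul_nonneg (mul_nonneg (hc0 _ _) (hf0 _)) (hf0 _)) fun p => ?_
  calc c p.1 p.2 * f p.2 * f p.1 ≤ C * (1 + p.1) * (1 + p.2) * f p.2 * f p.1 := by
        gcongr; exacts [hf0 _, hf0 _, hc _ _]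
    _ = _ := by ring

theorem summable_jumpRate_terms (k : ℕ) :
    Summable fun l => c k l * f l :=
  (hf.mul_left (C * (1 + k))).of_nonneg_of_le (fun l => mul_nonneg (hc0 k l) (hf0 l))
    fun l => by simpa only [mul_assoc] using mul_le_mul_of_nonneg_right (hc k l) (hf0 l)

theorem jumpRate_le (k : ℕ) :
    jumpRate c f k ≤ C * (1 + k) * ∑' l : ℕ, (1 + (l : ℝ)) * f l := by
  rw [← tsum_mul_left]
  exact (summable_jumpRate_terms hc0 hc hf0 hf k).tsum_le_tsum
    (fun l => by simpa only [mul_assoc] using mul_le_mul_of_nonneg_right (hc k l) (hf0 l))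
    (hf.mul_left _)

theorem summable_one_add_mul_jumpRate_mul
    (hf2 : Summable fun k : ℕ => (1 + (k : ℝ)) ^ 2 * f k) :
    Summable fun k : ℕ => (1 + (k : ℝ)) * (jumpRate c f k * f k) := by
  set M := ∑' l : ℕ, (1 + (l : ℝ)) * f l
  refine (hf2.mul_left (C * M)).of_nonneg_of_le
    (fun k => mul_nonneg (by positivity) (mul_nonneg (jumpRate_nonneg hc0 hf0 k) (hf0 k)))
    fun k => ?_
  calc (1 + (k : ℝ)) * (jumpRate c f k * f k) ≤ (1 + k) * (C * (1 + k) * M * f k) := by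
        gcongr
        · exact hf0 k
        · exact jumpRate_le hc0 hc hf0 hf k
    _ = C * M * ((1 + k) ^ 2 * f k) := by ring

theorem summable_jumpRate_mul (hf2 : Summable fun k : ℕ => (1 + (k : ℝ)) ^ 2 * f k) :
    Summable fun k => jumpRate c f k * f k :=
  summable_of_summable_one_add_mul (fun k => mul_nonneg (jumpRate_nonneg hc0 hf0 k) (hf0 k))
    (summable_one_add_mul_jumpRate_mul hc0 hc hf0 hf hf2)

theorem summable_nat_mul_jumpRate_mul (hf2 : Summable fun k : ℕ => (1 + (k : ℝ)) ^ 2 * f k) :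
    Summable fun k : ℕ => (k : ℝ) * (jumpRate c f k * f k) :=
  summable_nat_mul_of_summable_one_add_mul
    (fun k => mul_nonneg (jumpRate_nonneg hc0 hf0 k) (hf0 k))
    (summable_one_add_mul_jumpRate_mul hc0 hc hf0 hf hf2)

end JumpRate

/-- The mean-field equation conserves the total mass `Σ_k k·f_k`:
the series `Σ_k k·[μ_{k+1}f_{k+1} + β_{k−1}f_{k−1} − (μ_k+β_k)f_k]`
converges absolutely and equals `0`. -/
theorem stmt_11 (C : ℝ) (hC : 0 < C)
    (c : ℕ → ℕ → ℝ)
    (hc_nonneg : ∀ k l, 0 ≤ c k l)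
    (hc_zero : ∀ l, c 0 l = 0)
    (hc_sub : ∀ k l, c k l ≤ C * k * (1 + l))
    (f : ℕ → ℝ) (hf : ∀ k, 0 ≤ f k)
    (hf2 : Summable (fun k : ℕ => (1 + (k : ℝ)) ^ 2 * f k))
    (μ β : ℕ → ℝ)
    (hμ : ∀ k, μ k = ∑' l : ℕ, c k l * f l)
    (hβ : ∀ k, β k = ∑' l : ℕ, c (l + 1) k * f (l + 1)) :
    (∀ k, Summable (fun l : ℕ => c k l * f l))
    ∧ (∀ k, Summable (fun l : ℕ => c (l + 1) k * f (l + 1)))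
    ∧ Summable (fun k : ℕ => (k : ℝ) *
        (μ (k + 1) * f (k + 1)
          + (if k = 0 then 0 else β (k - 1) * f (k - 1))
          - (μ k + β k) * f k))
    ∧ (∑' k : ℕ, (k : ℝ) *
        (μ (k + 1) * f (k + 1)
          + (if k = 0 then 0 else β (k - 1) * f (k - 1))
          - (μ k + β k) * f k)) = 0 := by
  have hc : ∀ k l, c k l ≤ C * (1 + k) * (1 + l) := fun k l =>
    (hc_sub k l).trans (by gcongr; linarith)
  have hcT_nonneg : ∀ k l, 0 ≤ swap c k l := fun k l => hc_nonneg l k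
  have hcT : ∀ k l, swap c k l ≤ C * (1 + k) * (1 + l) := fun k l =>
    (hc l k).trans_eq (by ring)
  have hf1 : Summable fun k : ℕ => (1 + (k : ℝ)) * f k :=
    summable_of_summable_one_add_mul (fun k => mul_nonneg (by positivity) (hf k))
      (by simpa only [sq, mul_assoc] using hf2)
  have hcT_terms := summable_jumpRate_terms hcT_nonneg hcT hf hf1
  obtain rfl : μ = jumpRate c f := funext hμ
  obtain rfl : β = jumpRate (swap c) f := funext fun k => by
    rw [hβ, jumpRate, (hcT_terms k).tsum_eq_zero_add]
    simp [hc_zero]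
  have key := ((summable_jumpRate_mul hc_nonneg hc hf hf1 hf2).hasSum.nat_mul_succ_sub
    (summable_nat_mul_jumpRate_mul hc_nonneg hc hf hf1 hf2).hasSum).add
    ((summable_jumpRate_mul hcT_nonneg hcT hf hf1 hf2).hasSum.nat_mul_pred_sub
    (summable_nat_mul_jumpRate_mul hcT_nonneg hcT hf hf1 hf2).hasSum)
  have hμ_zero : jumpRate c f 0 = 0 := by simp [jumpRate, hc_zero]
  rw [hμ_zero, zero_mul, zero_sub, tsum_jumpRate_mul_swap
    (summable_kernel_mul_mul hc_nonneg hc hf hf1), neg_add_cancel] at key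
  refine ⟨summable_jumpRate_terms hc_nonneg hc hf hf1,
    fun k => (summable_nat_add_iff 1).mpr (hcT_terms k), ?_⟩
  suffices hseries : HasSum (fun k : ℕ => _) (0 : ℝ) from ⟨hseries.summable, hseries.tsum_eq⟩
  exact key.congr_fun fun k => by ring
end

section
/- Let C > 0 and let f : ℕ → [0,∞) satisfy Σ_{k≥0} (1+k)·f_k < ∞. Define μ_k := Σ_{l≥0} c(k,l)·f_l and β_k := Σ_{l≥1} c(l,k)·f_l, with the conventions f_{−1} = 0, β_{−1} = 0 and μ_0 = 0. Then the series Σ_{k≥0} [ μ_{k+1}·f_{k+1} + β_{k−1}·f_{k−1} − (μ_k + β_k)·f_k ] converges absolutely and equals 0. -/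
/-!
Since `c(k,l) ≤ C k (1 + l)` and `c(0,l) = 0`, both `μ_k` and `β_k = Σ_j c(j,k) f_j` are
`O(1 + k)`, so the first moment of `f` makes `μ_k f_k` and `β_k f_k` summable. The series then
splits into the shifted copies of `Σ μ_k f_k` and `Σ β_k f_k` minus the series themselves, and
what is left is the boundary term `-μ_0 f_0 = 0`.
-/

theorem hasSum_succ_add_pred_sub {G : Type*} [AddCommGroup G] [TopologicalSpace G]
    [IsTopologicalAddGroup G] {a b : ℕ → G} {A B : G} (ha : HasSum a A) (hb : HasSum b B) :
    HasSum (fun k => a (k + 1) + (if k = 0 then 0 else b (k - 1)) - (a k + b k)) (-a 0) := by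
  have hsucc : HasSum (fun k => a (k + 1)) (A - a 0) := by
    simpa using (hasSum_nat_add_iff' 1).mpr ha
  have hpred : HasSum (fun k => if k = 0 then 0 else b (k - 1)) B :=
    (hasSum_nat_add_iff' 1).mp (by simpa using hb)
  convert (hsucc.add hpred).sub (ha.add hb) using 1
  abel

section FirstMoment

variable {f m : ℕ → ℝ} {A : ℝ}

theorem summable_mul_of_le_linear (hf : ∀ k, 0 ≤ f k)
    (hf1 : Summable fun k : ℕ => (1 + (k : ℝ)) * f k) (hm0 : ∀ k, 0 ≤ m k)
    (hm : ∀ k, m k ≤ A * (1 + k)) : Summable fun k => m k * f k :=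
  Summable.of_nonneg_of_le (fun k => mul_nonneg (hm0 k) (hf k))
    (fun k => (mul_le_mul_of_nonneg_right (hm k) (hf k)).trans_eq (by ring)) (hf1.mul_left A)

theorem tsum_mul_le_of_le_linear (hf : ∀ k, 0 ≤ f k)
    (hf1 : Summable fun k : ℕ => (1 + (k : ℝ)) * f k) (hm0 : ∀ k, 0 ≤ m k)
    (hm : ∀ k, m k ≤ A * (1 + k)) : ∑' k, m k * f k ≤ A * ∑' k : ℕ, (1 + (k : ℝ)) * f k := by
  rw [← tsum_mul_left]
  exact (summable_mul_of_le_linear hf hf1 hm0 hm).tsum_le_tsum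
    (fun k => (mul_le_mul_of_nonneg_right (hm k) (hf k)).trans_eq (by ring)) (hf1.mul_left A)

end FirstMoment

theorem stmt_12_general (C : ℝ)
    (c : ℕ → ℕ → ℝ)
    (hc_nonneg : ∀ k l, 0 ≤ c k l)
    (hc_zero : ∀ l, c 0 l = 0)
    (hc_sub : ∀ k l, c k l ≤ C * k * (1 + l))
    (f : ℕ → ℝ) (hf : ∀ k, 0 ≤ f k)
    (hf1 : Summable (fun k : ℕ => (1 + (k : ℝ)) * f k))
    (μ β : ℕ → ℝ)
    (hμ : ∀ k, μ k = ∑' l : ℕ, c k l * f l)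
    (hβ : ∀ k, β k = ∑' l : ℕ, c (l + 1) k * f (l + 1)) :
    Summable (fun k : ℕ =>
        μ (k + 1) * f (k + 1)
          + (if k = 0 then 0 else β (k - 1) * f (k - 1))
          - (μ k + β k) * f k)
    ∧ (∑' k : ℕ,
        (μ (k + 1) * f (k + 1)
          + (if k = 0 then 0 else β (k - 1) * f (k - 1))
          - (μ k + β k) * f k)) = 0 := by
  have hC : 0 ≤ C := by simpa using (hc_nonneg 1 0).trans (hc_sub 1 0)
  set S := ∑' k : ℕ, (1 + (k : ℝ)) * f k
  have hS : 0 ≤ S := tsum_nonneg fun k => mul_nonneg (by positivity) (hf k)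
  have hμ_le : ∀ k, μ k ≤ C * S * (1 + k) := fun k => calc
    μ k ≤ C * k * S := hμ k ▸ tsum_mul_le_of_le_linear hf hf1 (hc_nonneg k) (hc_sub k)
    _ ≤ C * S * (1 + k) := by nlinarith [mul_nonneg hC hS]
  have hc_col : ∀ k j, c j k ≤ C * (1 + k) * (1 + j) := fun k j =>
    (hc_sub j k).trans (by nlinarith [mul_nonneg hC (by positivity : (0 : ℝ) ≤ 1 + k)])
  have hβ_col : ∀ k, β k = ∑' j, c j k * f j := fun k => by
    rw [hβ k, (summable_mul_of_le_linear hf hf1 (hc_nonneg · k) (hc_col k)).tsum_eq_zero_add,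
      hc_zero, zero_mul, zero_add]
  have hβ_le : ∀ k, β k ≤ C * S * (1 + k) := fun k => calc
    β k ≤ C * (1 + k) * S :=
      (hβ_col k).symm ▸ tsum_mul_le_of_le_linear hf hf1 (hc_nonneg · k) (hc_col k)
    _ = C * S * (1 + k) := by ring
  have hμ_nonneg : ∀ k, 0 ≤ μ k := fun k =>
    hμ k ▸ tsum_nonneg fun l => mul_nonneg (hc_nonneg k l) (hf l)
  have hβ_nonneg : ∀ k, 0 ≤ β k := fun k =>
    (hβ_col k).symm ▸ tsum_nonneg fun j => mul_nonneg (hc_nonneg j k) (hf j)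
  have hsum := hasSum_succ_add_pred_sub
    (summable_mul_of_le_linear hf hf1 hμ_nonneg hμ_le).hasSum
    (summable_mul_of_le_linear hf hf1 hβ_nonneg hβ_le).hasSum
  simp only [← add_mul, hμ 0, hc_zero, zero_mul, tsum_zero, neg_zero] at hsum
  exact ⟨hsum.summable, hsum.tsum_eq⟩

/-- The mean-field equation conserves the total probability `Σ_k f_k`:
the series `Σ_k [μ_{k+1}f_{k+1} + β_{k−1}f_{k−1} − (μ_k+β_k)f_k]`
converges absolutely and equals `0`. -/
theorem stmt_12 (C : ℝ) (hC : 0 < C)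
    (c : ℕ → ℕ → ℝ)
    (hc_nonneg : ∀ k l, 0 ≤ c k l)
    (hc_zero : ∀ l, c 0 l = 0)
    (hc_sub : ∀ k l, c k l ≤ C * k * (1 + l))
    (f : ℕ → ℝ) (hf : ∀ k, 0 ≤ f k)
    (hf1 : Summable (fun k : ℕ => (1 + (k : ℝ)) * f k))
    (μ β : ℕ → ℝ)
    (hμ : ∀ k, μ k = ∑' l : ℕ, c k l * f l)
    (hβ : ∀ k, β k = ∑' l : ℕ, c (l + 1) k * f (l + 1)) :
    Summable (fun k : ℕ =>
        μ (k + 1) * f (k + 1)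
          + (if k = 0 then 0 else β (k - 1) * f (k - 1))
          - (μ k + β k) * f k)
    ∧ (∑' k : ℕ,
        (μ (k + 1) * f (k + 1)
          + (if k = 0 then 0 else β (k - 1) * f (k - 1))
          - (μ k + β k) * f k)) = 0 :=
  stmt_12_general C c hc_nonneg hc_zero hc_sub f hf hf1 μ β hμ hβ
end

section
/- Let C > 0, ρ > 0 and let f : ℕ → [0,∞) satisfy Σ_{k≥0} (1+k)²·f_k < ∞. Define μ_k := Σ_{l≥0} c(k,l)·f_l, β_k := Σ_{l≥1} c(l,k)·f_l, and the size-biased quantities p_n := n·f_n/ρ for n ≥ 1. Then for every integer k ≥ 2, (k/(k+1))·μ_{k+1}·p_{k+1} + β_{k−1}·p_{k−1} + Σ_{n≥1} (1/n)·c(n,k−1)·f_{k−1}·p_n − [ ((k−1)/k)·μ_k + (1/k)·Σ_{n≥1} c(k,n−1)·f_{n−1} + β_k ]·p_k = (k/ρ)·[ μ_{k+1}·f_{k+1} + β_{k−1}·f_{k−1} − (μ_k + β_k)·f_k ], all series converging absolutely. In particular, Σ_{n≥1} (1/n)·c(n,k−1)·f_{k−1}·p_n = (1/(k−1))·β_{k−1}·p_{k−1}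 and Σ_{n≥1} c(k,n−1)·f_{n−1} = μ_k. -/
/-!
Both series are reindexings of the rate series: since `p_{n+1} = (n+1) f_{n+1} / ρ`, the factor
`1/(n+1)` cancels and `Σ_n (1/(n+1)) c(n+1,k-1) f_{k-1} p_{n+1} = (f_{k-1}/ρ) β_{k-1}`, while the
second series is `μ_k` written with the index shifted by one. Their convergence comes from the
linear growth of `c` in each argument against the finite first moment of `f`. After these
substitutions the identity is a rational-function identity in `k` and `ρ`.
-/

lemma summable_mul_of_le_mul_weight {a w f : ℕ → ℝ} {K : ℝ} (hf : ∀ n, 0 ≤ f n)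
    (ha : ∀ n, 0 ≤ a n) (hle : ∀ n, a n ≤ K * w n) (hw : Summable fun n => w n * f n) :
    Summable fun n => a n * f n :=
  (hw.mul_left K).of_nonneg_of_le (fun n => mul_nonneg (ha n) (hf n)) fun n => by
    rw [← mul_assoc]
    exact mul_le_mul_of_nonneg_right (hle n) (hf n)

lemma summable_one_add_mul_of_summable_one_add_sq_mul {f : ℕ → ℝ} (hf : ∀ n, 0 ≤ f n)
    (hf2 : Summable fun n : ℕ => (1 + (n : ℝ)) ^ 2 * f n) :
    Summable fun n : ℕ => (1 + (n : ℝ)) * f n :=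
  summable_mul_of_le_mul_weight (K := 1) hf (fun n => by positivity)
    (fun n => by nlinarith [(n.cast_nonneg : (0 : ℝ) ≤ n)]) hf2

lemma summable_col_mul_of_sublinear {C : ℝ} {c : ℕ → ℕ → ℝ} {f : ℕ → ℝ}
    (hc_nonneg : ∀ k l, 0 ≤ c k l)
    (hc_sub : ∀ k l, c k l ≤ C * k * (1 + l)) (hf : ∀ n, 0 ≤ f n)
    (hf1 : Summable fun n : ℕ => (1 + (n : ℝ)) * f n) (l : ℕ) :
    Summable fun k => c k l * f k := by
  refine summable_mul_of_le_mul_weight (K := C * (1 + l)) hf (hc_nonneg · l) ?_ hf1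
  intro k
  have hC : 0 ≤ C := by simpa using (hc_nonneg 1 0).trans (hc_sub 1 0)
  nlinarith [hc_sub k l, (k.cast_nonneg : (0 : ℝ) ≤ k), (l.cast_nonneg : (0 : ℝ) ≤ l)]

theorem stmt_13_general (C ρ : ℝ)
    (c : ℕ → ℕ → ℝ)
    (hc_nonneg : ∀ k l, 0 ≤ c k l)
    (hc_sub : ∀ k l, c k l ≤ C * k * (1 + l))
    (f : ℕ → ℝ) (hf : ∀ k, 0 ≤ f k)
    (hf2 : Summable (fun k : ℕ => (1 + (k : ℝ)) ^ 2 * f k))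
    (μ β p : ℕ → ℝ)
    (hμ : ∀ j, μ j = ∑' l : ℕ, c j l * f l)
    (hβ : ∀ j, β j = ∑' l : ℕ, c (l + 1) j * f (l + 1))
    (hp : ∀ m, 1 ≤ m → p m = (m : ℝ) * f m / ρ)
    (k : ℕ) (hk : 2 ≤ k) :
    Summable (fun n : ℕ => (1 / ((n : ℝ) + 1)) * c (n + 1) (k - 1) * f (k - 1) * p (n + 1))
    ∧ Summable (fun n : ℕ => c k ((n + 1) - 1) * f ((n + 1) - 1))
    ∧ ((k : ℝ) / ((k : ℝ) + 1)) * μ (k + 1) * p (k + 1)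
        + β (k - 1) * p (k - 1)
        + (∑' n : ℕ, (1 / ((n : ℝ) + 1)) * c (n + 1) (k - 1) * f (k - 1) * p (n + 1))
        - ((((k : ℝ) - 1) / (k : ℝ)) * μ k
            + (1 / (k : ℝ)) * (∑' n : ℕ, c k ((n + 1) - 1) * f ((n + 1) - 1))
            + β k) * p k
      = ((k : ℝ) / ρ) *
          (μ (k + 1) * f (k + 1) + β (k - 1) * f (k - 1) - (μ k + β k) * f k)
    ∧ (∑' n : ℕ, (1 / ((n : ℝ) + 1)) * c (n + 1) (k - 1) * f (k - 1) * p (n + 1))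
        = (1 / ((k : ℝ) - 1)) * β (k - 1) * p (k - 1)
    ∧ (∑' n : ℕ, c k ((n + 1) - 1) * f ((n + 1) - 1)) = μ k := by
  obtain ⟨j, rfl⟩ : ∃ j, k = j + 1 := ⟨k - 1, by omega⟩
  have hf1 := summable_one_add_mul_of_summable_one_add_sq_mul hf hf2
  have hlongRange : HasSum (fun n : ℕ => (1 / ((n : ℝ) + 1)) * c (n + 1) j * f j * p (n + 1))
      (f j / ρ * β j) := by
    rw [hβ]
    refine (((summable_nat_add_iff 1).mpr
      (summable_col_mul_of_sublinear hc_nonneg hc_sub hf hf1 j)).hasSum.mul_left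
      (f j / ρ)).congr_fun fun n => ?_
    rw [hp (n + 1) (by omega)]
    push_cast
    field_simp
  have hμ_hasSum : HasSum (fun n => c (j + 1) n * f n) (μ (j + 1)) :=
    hμ _ ▸ (summable_mul_of_le_mul_weight hf (hc_nonneg _) (hc_sub _) hf1).hasSum
  simp only [Nat.add_sub_cancel]
  refine ⟨hlongRange.summable, hμ_hasSum.summable, ?_, ?_, hμ_hasSum.tsum_eq⟩
  · rw [hlongRange.tsum_eq, hμ_hasSum.tsum_eq, hp (j + 2) (by omega), hp (j + 1) (by omega),
      hp j (by omega)]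
    push_cast
    field_simp
    ring
  · have hj : (j : ℝ) ≠ 0 := by norm_cast; omega
    rw [hlongRange.tsum_eq, hp j (by omega)]
    push_cast
    rw [add_sub_cancel_right]
    field_simp

/-- The size-biased quantities `p_k = k·f_k/ρ` solve the size-biased
mean-field equation: for `k ≥ 2` the master-equation form of the limiting
tagged-site generator equals `k/ρ` times the mean-field right-hand side. -/
theorem stmt_13 (C ρ : ℝ) (hC : 0 < C) (hρ : 0 < ρ)
    (c : ℕ → ℕ → ℝ)
    (hc_nonneg : ∀ k l, 0 ≤ c k l)
    (hc_zero : ∀ l, c 0 l = 0)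
    (hc_sub : ∀ k l, c k l ≤ C * k * (1 + l))
    (f : ℕ → ℝ) (hf : ∀ k, 0 ≤ f k)
    (hf2 : Summable (fun k : ℕ => (1 + (k : ℝ)) ^ 2 * f k))
    (μ β p : ℕ → ℝ)
    (hμ : ∀ j, μ j = ∑' l : ℕ, c j l * f l)
    (hβ : ∀ j, β j = ∑' l : ℕ, c (l + 1) j * f (l + 1))
    (hp : ∀ m, 1 ≤ m → p m = (m : ℝ) * f m / ρ)
    (k : ℕ) (hk : 2 ≤ k) :
    Summable (fun n : ℕ => (1 / ((n : ℝ) + 1)) * c (n + 1) (k - 1) * f (k - 1) * p (n + 1))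
    ∧ Summable (fun n : ℕ => c k ((n + 1) - 1) * f ((n + 1) - 1))
    ∧ ((k : ℝ) / ((k : ℝ) + 1)) * μ (k + 1) * p (k + 1)
        + β (k - 1) * p (k - 1)
        + (∑' n : ℕ, (1 / ((n : ℝ) + 1)) * c (n + 1) (k - 1) * f (k - 1) * p (n + 1))
        - ((((k : ℝ) - 1) / (k : ℝ)) * μ k
            + (1 / (k : ℝ)) * (∑' n : ℕ, c k ((n + 1) - 1) * f ((n + 1) - 1))
            + β k) * p k
      = ((k : ℝ) / ρ) *
          (μ (k + 1) * f (k + 1) + β (k - 1) * f (k - 1) - (μ k + β k) * f k)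
    ∧ (∑' n : ℕ, (1 / ((n : ℝ) + 1)) * c (n + 1) (k - 1) * f (k - 1) * p (n + 1))
        = (1 / ((k : ℝ) - 1)) * β (k - 1) * p (k - 1)
    ∧ (∑' n : ℕ, c k ((n + 1) - 1) * f ((n + 1) - 1)) = μ k :=
  stmt_13_general C ρ c hc_nonneg hc_sub f hf hf2 μ β p hμ hβ hp k hk
end

section
/- Let C, ρ > 0 and let L ≥ 2 be an integer. Let g : ℕ → ℝ be bounded with ‖g‖_∞ := sup_m |g(m)| < ∞, let W ≥ 1 be an integer, let F : ℕ → [0,∞) be finitely supported with Σ_k k·F_k ≤ ρ, and let f : ℕ → [0,∞) satisfy Σ_k f_k ≤ 1 and Σ_k k·f_k ≤ ρ. Set β := Σ_{k≥1} c(k,W)·f_k and μ := Σ_{k≥0} c(W,k)·f_k, and define A := β·(g(W+1) − g(W)) + ((W−1)/W)·μ·(g(W−1) − g(W)) + (1/W)·Σ_{k≥1} c(W,k−1)·f_{k−1}·(g(k) − g(W)), and B := Σ_{k≥1} c(k,W)·F_k·(g(W+1) − g(W)) + ((W−1)/W)·Σ_{k≥0} c(W,k)·F_k·(g(W−1) −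 g(W)) + (1/W)·Σ_{k≥0} c(W,k)·F_k·(g(k+1) − g(W)) − (1/L)·c(W,W)·[ ((W+1)/W)·(g(W+1) − g(W)) + ((W−1)/W)·(g(W−1) − g(W)) ]. Then |A − B| ≤ 2·‖g‖_∞·( 4·C·W·Σ_{k≥1} k·|F_k − f_k| + C·W·|F_0 − f_0| + 4·C·W²/L ). -/
/-!
The difference `A - B` is the self-interaction term of the tagged site minus the mean-field
generator applied to the signed profile `F - f`, on which it is linear. The rates grow at most
linearly in each argument and `g` is bounded, so each of the three sums of that generator is
controlled by the first moment `∑ (1 + k) |F k - f k| ≤ |F 0 - f 0| + 2 ∑ k |F k - f k|`,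
while the self-interaction term is `O(W² / L)` because `c W W ≤ 2 C W²`.
-/

section FirstMoment

variable {u : ℕ → ℝ}

lemma summable_one_add_mul_abs (hu : Summable u) (hku : Summable fun k : ℕ => (k : ℝ) * u k) :
    Summable fun k : ℕ => (1 + (k : ℝ)) * |u k| :=
  (hu.abs.add hku.abs).congr fun k => by rw [abs_mul, Nat.abs_cast]; ring

lemma Summable.one_add_mul_abs_succ (hu : Summable fun k : ℕ => (1 + (k : ℝ)) * |u k|) :
    Summable fun k : ℕ => (1 + (k : ℝ)) * |u (k + 1)| :=
  ((summable_nat_add_iff 1).2 hu).of_nonneg_of_le (fun k => by positivity) fun k => by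
    gcongr; linarith

lemma Summable.mul_abs_of_one_add_mul_abs (hu : Summable fun k : ℕ => (1 + (k : ℝ)) * |u k|) :
    Summable fun k : ℕ => (k : ℝ) * |u k| :=
  hu.of_nonneg_of_le (fun k => by positivity) fun k => by gcongr; linarith

lemma tsum_one_add_mul_abs_succ (hu : Summable fun k : ℕ => (1 + (k : ℝ)) * |u k|) :
    ∑' k : ℕ, (1 + (k : ℝ)) * |u (k + 1)| = ∑' k : ℕ, (k : ℝ) * |u k| := by
  rw [hu.mul_abs_of_one_add_mul_abs.tsum_eq_zero_add]
  simp only [Nat.cast_zero, zero_mul, zero_add, Nat.cast_add, Nat.cast_one, add_comm (1 : ℝ)]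

lemma tsum_one_add_mul_abs_le (hu : Summable fun k : ℕ => (1 + (k : ℝ)) * |u k|) :
    ∑' k : ℕ, (1 + (k : ℝ)) * |u k| ≤ |u 0| + 2 * ∑' k : ℕ, (k : ℝ) * |u k| := by
  rw [hu.tsum_eq_zero_add, ← tsum_one_add_mul_abs_succ hu, ← tsum_mul_left]
  simp only [Nat.cast_zero, add_zero, one_mul]
  refine add_le_add_right (Summable.tsum_le_tsum (fun k => ?_) ((summable_nat_add_iff 1).2 hu)
    (hu.one_add_mul_abs_succ.mul_left 2)) _
  push_cast
  nlinarith [abs_nonneg (u (k + 1)), (Nat.cast_nonneg k : (0 : ℝ) ≤ k)]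

lemma abs_tsum_le_of_abs_le_one_add_mul {φ : ℕ → ℝ} {M : ℝ}
    (h : ∀ k, |φ k| ≤ M * ((1 + (k : ℝ)) * |u k|))
    (hu : Summable fun k : ℕ => (1 + (k : ℝ)) * |u k|) :
    |∑' k, φ k| ≤ M * ∑' k : ℕ, (1 + (k : ℝ)) * |u k| := by
  simpa only [Real.norm_eq_abs, tsum_mul_left] using
    tsum_of_norm_bounded (f := φ) (hu.mul_left M).hasSum h

end FirstMoment

noncomputable def taggedGenerator (c : ℕ → ℕ → ℝ) (g : ℕ → ℝ) (W : ℕ) (u : ℕ → ℝ) : ℝ :=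
  (∑' k : ℕ, c (k + 1) W * u (k + 1)) * (g (W + 1) - g W)
    + (((W : ℝ) - 1) / (W : ℝ)) * (∑' k : ℕ, c W k * u k) * (g (W - 1) - g W)
    + (1 / (W : ℝ)) * ∑' k : ℕ, c W k * u k * (g (k + 1) - g W)

/-- The tagged site itself carries mass `1 / L` of the empirical measure, at occupation `W`;
this is its contribution to the three sums of `taggedGenerator`. -/
noncomputable def selfInteraction (c : ℕ → ℕ → ℝ) (g : ℕ → ℝ) (W L : ℕ) : ℝ :=
  (1 / (L : ℝ)) * c W W *
    ((((W : ℝ) + 1) / (W : ℝ)) * (g (W + 1) - g W)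
      + (((W : ℝ) - 1) / (W : ℝ)) * (g (W - 1) - g W))

section TaggedGenerator

variable {c : ℕ → ℕ → ℝ} {C : ℝ} {g : ℕ → ℝ} {Gn : ℝ} {W : ℕ}

lemma abs_sub_le_two_mul_of_abs_le (hg : ∀ m, |g m| ≤ Gn) (a b : ℕ) : |g a - g b| ≤ 2 * Gn := by
  linarith [abs_sub (g a) (g b), hg a, hg b]

lemma abs_inflow_le (hc : ∀ k l, |c k l| ≤ C * k * (1 + l)) (W k : ℕ) (u : ℕ → ℝ) :
    |c (k + 1) W * u (k + 1)| ≤ C * (1 + W) * ((1 + k) * |u (k + 1)|) := by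
  rw [abs_mul]
  exact (mul_le_mul_of_nonneg_right (hc _ _) (abs_nonneg _)).trans_eq (by push_cast; ring)

lemma abs_outflow_le (hc : ∀ k l, |c k l| ≤ C * k * (1 + l)) (W k : ℕ) (u : ℕ → ℝ) :
    |c W k * u k| ≤ C * W * ((1 + k) * |u k|) := by
  rw [abs_mul]
  exact (mul_le_mul_of_nonneg_right (hc _ _) (abs_nonneg _)).trans_eq (by ring)

lemma abs_taggedJump_le (hc : ∀ k l, |c k l| ≤ C * k * (1 + l)) (hg : ∀ m, |g m| ≤ Gn)
    (W k : ℕ) (u : ℕ → ℝ) :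
    |c W k * u k * (g (k + 1) - g W)| ≤ C * W * (2 * Gn) * ((1 + k) * |u k|) := by
  have hout := abs_outflow_le hc W k u
  rw [abs_mul]
  exact (mul_le_mul hout (abs_sub_le_two_mul_of_abs_le hg _ _) (abs_nonneg _)
    ((abs_nonneg _).trans hout)).trans_eq (by ring)

lemma taggedGenerator_sub (hc : ∀ k l, |c k l| ≤ C * k * (1 + l)) (hg : ∀ m, |g m| ≤ Gn)
    {u v : ℕ → ℝ} (hu : Summable fun k : ℕ => (1 + (k : ℝ)) * |u k|)
    (hv : Summable fun k : ℕ => (1 + (k : ℝ)) * |v k|) :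
    taggedGenerator c g W (u - v) = taggedGenerator c g W u - taggedGenerator c g W v := by
  have hin : ∑' k : ℕ, c (k + 1) W * (u - v) (k + 1)
      = ∑' k : ℕ, c (k + 1) W * u (k + 1) - ∑' k : ℕ, c (k + 1) W * v (k + 1) := by
    rw [← Summable.tsum_sub
      ((hu.one_add_mul_abs_succ.mul_left _).of_norm_bounded (abs_inflow_le hc W · u))
      ((hv.one_add_mul_abs_succ.mul_left _).of_norm_bounded (abs_inflow_le hc W · v))]
    simp only [Pi.sub_apply, mul_sub]
  have hout : ∑' k : ℕ, c W k * (u - v) k = ∑' k : ℕ, c W k * u k - ∑' k : ℕ, c W k * v k := by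
    rw [← Summable.tsum_sub ((hu.mul_left _).of_norm_bounded (abs_outflow_le hc W · u))
      ((hv.mul_left _).of_norm_bounded (abs_outflow_le hc W · v))]
    simp only [Pi.sub_apply, mul_sub]
  have hjump : ∑' k : ℕ, c W k * (u - v) k * (g (k + 1) - g W)
      = ∑' k : ℕ, c W k * u k * (g (k + 1) - g W) - ∑' k : ℕ, c W k * v k * (g (k + 1) - g W) := by
    rw [← Summable.tsum_sub ((hu.mul_left _).of_norm_bounded (abs_taggedJump_le hc hg W · u))
      ((hv.mul_left _).of_norm_bounded (abs_taggedJump_le hc hg W · v))]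
    exact tsum_congr fun k => by simp only [Pi.sub_apply]; ring
  simp only [taggedGenerator]
  rw [hin, hout, hjump]
  ring

lemma abs_taggedGenerator_le (hc : ∀ k l, |c k l| ≤ C * k * (1 + l)) (hg : ∀ m, |g m| ≤ Gn)
    (hW : 1 ≤ W) {u : ℕ → ℝ} (hu : Summable fun k : ℕ => (1 + (k : ℝ)) * |u k|) :
    |taggedGenerator c g W u| ≤ 2 * Gn * (C * (1 + W) * ∑' k : ℕ, (1 + (k : ℝ)) * |u (k + 1)|
      + C * W * ∑' k : ℕ, (1 + (k : ℝ)) * |u k|) := by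
  have hin := abs_tsum_le_of_abs_le_one_add_mul (abs_inflow_le hc W · u) hu.one_add_mul_abs_succ
  have hout := abs_tsum_le_of_abs_le_one_add_mul (abs_outflow_le hc W · u) hu
  have hjump := abs_tsum_le_of_abs_le_one_add_mul (abs_taggedJump_le hc hg W · u) hu
  have hup := abs_sub_le_two_mul_of_abs_le hg (W + 1) W
  have hdown := abs_sub_le_two_mul_of_abs_le hg (W - 1) W
  have hW0 : (0 : ℝ) < W := by exact_mod_cast hW
  have hstay : (0 : ℝ) ≤ ((W : ℝ) - 1) / W :=
    div_nonneg (sub_nonneg.2 (by exact_mod_cast hW)) hW0.le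
  unfold taggedGenerator
  calc _ ≤ |∑' k : ℕ, c (k + 1) W * u (k + 1)| * |g (W + 1) - g W|
        + ((W : ℝ) - 1) / W * |∑' k : ℕ, c W k * u k| * |g (W - 1) - g W|
        + 1 / W * |∑' k : ℕ, c W k * u k * (g (k + 1) - g W)| := by
        refine (abs_add_three _ _ _).trans_eq ?_
        rw [abs_mul, abs_mul, abs_mul, abs_mul, abs_of_nonneg hstay,
          abs_of_nonneg (by positivity : (0 : ℝ) ≤ 1 / W)]
    _ ≤ C * (1 + W) * (∑' k : ℕ, (1 + (k : ℝ)) * |u (k + 1)|) * (2 * Gn)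
        + ((W : ℝ) - 1) / W * (C * W * ∑' k : ℕ, (1 + (k : ℝ)) * |u k|) * (2 * Gn)
        + 1 / W * (C * W * (2 * Gn) * ∑' k : ℕ, (1 + (k : ℝ)) * |u k|) := by
        gcongr
        · exact (abs_nonneg _).trans hin
        · exact mul_nonneg hstay ((abs_nonneg _).trans hout)
    _ = _ := by field_simp; ring

lemma abs_selfInteraction_le (hc : ∀ k l, |c k l| ≤ C * k * (1 + l)) (hC : 0 ≤ C)
    (hg : ∀ m, |g m| ≤ Gn) (hW : 1 ≤ W) (L : ℕ) :
    |selfInteraction c g W L| ≤ 2 * Gn * (4 * C * W ^ 2 / L) := by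
  have hW1 : (1 : ℝ) ≤ W := by exact_mod_cast hW
  have hself : |c W W| ≤ 2 * C * W ^ 2 := (hc W W).trans <| by
    nlinarith [mul_nonneg (mul_nonneg hC (by linarith : (0 : ℝ) ≤ W)) (sub_nonneg.2 hW1)]
  have hup := abs_sub_le_two_mul_of_abs_le hg (W + 1) W
  have hdown := abs_sub_le_two_mul_of_abs_le hg (W - 1) W
  have hstay : (0 : ℝ) ≤ ((W : ℝ) - 1) / W := div_nonneg (by linarith) (by linarith)
  have hjumps : |((W : ℝ) + 1) / W * (g (W + 1) - g W) + ((W : ℝ) - 1) / W * (g (W - 1) - g W)|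
      ≤ 4 * Gn :=
    calc _ ≤ ((W : ℝ) + 1) / W * (2 * Gn) + ((W : ℝ) - 1) / W * (2 * Gn) := by
          refine (abs_add_le _ _).trans ?_
          rw [abs_mul, abs_mul, abs_of_nonneg hstay, abs_of_nonneg (by positivity)]
          gcongr
      _ = 4 * Gn := by field_simp; ring
  unfold selfInteraction
  rw [abs_mul, abs_mul, abs_of_nonneg (by positivity : (0 : ℝ) ≤ 1 / L)]
  calc _ ≤ 1 / (L : ℝ) * (2 * C * W ^ 2) * (4 * Gn) := by
        gcongr
    _ = _ := by ring

end TaggedGenerator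

theorem stmt_15_general (C : ℝ) (hC : 0 < C)
    (c : ℕ → ℕ → ℝ)
    (hc_nonneg : ∀ k l, 0 ≤ c k l)
    (hc_sub : ∀ k l, c k l ≤ C * k * (1 + l))
    (L : ℕ)
    (g : ℕ → ℝ) (Gn : ℝ) (hg : ∀ m, |g m| ≤ Gn)
    (W : ℕ) (hW : 1 ≤ W)
    (F : ℕ → ℝ) (hFfin : (Function.support F).Finite)
    (f : ℕ → ℝ)
    (hfs : Summable f) (hfks : Summable (fun k : ℕ => (k : ℝ) * f k)) :
    |((∑' k : ℕ, c (k + 1) W * f (k + 1)) * (g (W + 1) - g W)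
        + (((W : ℝ) - 1) / (W : ℝ)) * (∑' k : ℕ, c W k * f k) * (g (W - 1) - g W)
        + (1 / (W : ℝ)) * ∑' k : ℕ, c W k * f k * (g (k + 1) - g W))
      - ((∑' k : ℕ, c (k + 1) W * F (k + 1) * (g (W + 1) - g W))
        + (((W : ℝ) - 1) / (W : ℝ)) * (∑' k : ℕ, c W k * F k) * (g (W - 1) - g W)
        + (1 / (W : ℝ)) * (∑' k : ℕ, c W k * F k * (g (k + 1) - g W))
        - (1 / (L : ℝ)) * c W W *
            ((((W : ℝ) + 1) / (W : ℝ)) * (g (W + 1) - g W)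
              + (((W : ℝ) - 1) / (W : ℝ)) * (g (W - 1) - g W)))|
    ≤ 2 * Gn *
        (4 * C * W * (∑' k : ℕ, (k : ℝ) * |F k - f k|)
          + C * W * |F 0 - f 0|
          + 4 * C * (W : ℝ) ^ 2 / L) := by
  have hc : ∀ k l, |c k l| ≤ C * k * (1 + l) := fun k l =>
    (abs_of_nonneg (hc_nonneg k l)).trans_le (hc_sub k l)
  have hFs : Summable F := summable_of_hasFiniteSupport hFfin
  have hFks : Summable fun k : ℕ => (k : ℝ) * F k :=
    summable_of_hasFiniteSupport (hFfin.subset (Function.support_mul_subset_right _ _))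
  have hdiff := summable_one_add_mul_abs (hFs.sub hfs)
    ((hFks.sub hfks).congr fun k => (mul_sub _ _ _).symm)
  rw [tsum_mul_right]
  change |taggedGenerator c g W f - (taggedGenerator c g W F - selfInteraction c g W L)| ≤ _
  have hW1 : (1 : ℝ) ≤ W := by exact_mod_cast hW
  have hGn : 0 ≤ Gn := (abs_nonneg _).trans (hg 0)
  have hmoment : 0 ≤ ∑' k : ℕ, (k : ℝ) * |F k - f k| := tsum_nonneg fun k => by positivity
  calc _ = |selfInteraction c g W L - taggedGenerator c g W (F - f)| := by
        rw [taggedGenerator_sub hc hg (summable_one_add_mul_abs hFs hFks)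
          (summable_one_add_mul_abs hfs hfks)]
        congr 1; ring
    _ ≤ |selfInteraction c g W L| + |taggedGenerator c g W (F - f)| := abs_sub _ _
    _ ≤ 2 * Gn * (4 * C * W ^ 2 / L) + 2 * Gn * (C * (1 + W) * ∑' k : ℕ, (k : ℝ) * |F k - f k|
          + C * W * ∑' k : ℕ, (1 + (k : ℝ)) * |F k - f k|) := by
        rw [← tsum_one_add_mul_abs_succ hdiff]
        exact add_le_add (abs_selfInteraction_le hc hC.le hg hW L)
          (abs_taggedGenerator_le hc hg hW hdiff)
    _ ≤ 2 * Gn * (4 * C * W ^ 2 / L) + 2 * Gn * (2 * C * W * ∑' k : ℕ, (k : ℝ) * |F k - f k|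
          + C * W * (|F 0 - f 0| + 2 * ∑' k : ℕ, (k : ℝ) * |F k - f k|)) := by
        gcongr 2 * Gn * (4 * C * W ^ 2 / L) + 2 * Gn * (?_ + C * W * ?_)
        · nlinarith [mul_nonneg hC.le hmoment]
        · exact tsum_one_add_mul_abs_le hdiff
    _ = _ := by ring

/-- Deterministic comparison bound between the limiting tagged-site
generator `A = 𝓛̂ g(W)` (with mean-field profile `f`) and the rescaled
finite-`L` tagged-site generator `B = ((L−1)/L)·𝓛̂^L g(W)` (with empirical
measure `F`), for a bounded test function `g`. -/
theorem stmt_15 (C ρ : ℝ) (hC : 0 < C) (hρ : 0 < ρ)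
    (c : ℕ → ℕ → ℝ)
    (hc_nonneg : ∀ k l, 0 ≤ c k l)
    (hc_zero : ∀ l, c 0 l = 0)
    (hc_sub : ∀ k l, c k l ≤ C * k * (1 + l))
    (L : ℕ) (hL : 2 ≤ L)
    (g : ℕ → ℝ) (Gn : ℝ) (hg : ∀ m, |g m| ≤ Gn)
    (W : ℕ) (hW : 1 ≤ W)
    (F : ℕ → ℝ) (hF : ∀ k, 0 ≤ F k) (hFfin : (Function.support F).Finite)
    (hFρ : (∑' k : ℕ, (k : ℝ) * F k) ≤ ρ)
    (f : ℕ → ℝ) (hf : ∀ k, 0 ≤ f k)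
    (hfs : Summable f) (hfks : Summable (fun k : ℕ => (k : ℝ) * f k))
    (hf1 : (∑' k : ℕ, f k) ≤ 1) (hfρ : (∑' k : ℕ, (k : ℝ) * f k) ≤ ρ) :
    |((∑' k : ℕ, c (k + 1) W * f (k + 1)) * (g (W + 1) - g W)
        + (((W : ℝ) - 1) / (W : ℝ)) * (∑' k : ℕ, c W k * f k) * (g (W - 1) - g W)
        + (1 / (W : ℝ)) * ∑' k : ℕ, c W k * f k * (g (k + 1) - g W))
      - ((∑' k : ℕ, c (k + 1) W * F (k + 1) * (g (W + 1) - g W))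
        + (((W : ℝ) - 1) / (W : ℝ)) * (∑' k : ℕ, c W k * F k) * (g (W - 1) - g W)
        + (1 / (W : ℝ)) * (∑' k : ℕ, c W k * F k * (g (k + 1) - g W))
        - (1 / (L : ℝ)) * c W W *
            ((((W : ℝ) + 1) / (W : ℝ)) * (g (W + 1) - g W)
              + (((W : ℝ) - 1) / (W : ℝ)) * (g (W - 1) - g W)))|
    ≤ 2 * Gn *
        (4 * C * W * (∑' k : ℕ, (k : ℝ) * |F k - f k|)
          + C * W * |F 0 - f 0|
          + 4 * C * (W : ℝ) ^ 2 / L) :=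
  stmt_15_general C hC c hc_nonneg hc_sub L g Gn hg W hW F hFfin f hfs hfks
end
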